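/- Fix an integer n ≥ 3. For every ε ∈ (0,1), the function v_ε satisfies: (i) ∫₀¹ v_ε(r)²·r^{n−3} dr = |log ε|/2; (ii) ∫₀¹ v_ε'(r)²·r^{n−1} dr = (n−2)²·|log ε|/8 + π²/(2|log ε|), where v_ε' is the derivative of v_ε (equal to 0 on (0,ε)); (iii) ∫_ε¹ v_ε''(r)²·r^{n+1} dr = n²(n−2)²·|log ε|/32 + π²(n²−2n+2)/(4|log ε|) + π⁴/(2|log ε|³), where v_ε'' is the second derivative of v_ε on (ε,1). -/

import Mathlib

open MeasureTheory Real Set Filter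

noncomputable section

/-- The test function `v_ε` in dimension `n`: zero on `[0,ε]` and
`r^{−(n−2)/2}·sin(π·log r / log ε)` on `(ε,1]`. -/
def vepsn (n : ℕ) (ε : ℝ) : ℝ → ℝ := fun r =>
  if r ≤ ε then 0
  else r ^ (-(((n : ℝ) - 2) / 2)) * Real.sin (π * Real.log r / Real.log ε)

/-!
On `(ε, 1]` write `ω = π / log ε`. Then `v_ε`, `v_ε'` and `v_ε''` are all of the form
`r ^ k * (A sin (ω log r) + B cos (ω log r))`, a family closed under differentiation (with `k`
dropping by one each time). In each of the three integrals the weight `r ^ m` satisfies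
`2k + m = -1`, so the integrand is `(A sin (ω t) + B cos (ω t))² dt` with `t = log r`. As `t`
runs over `[log ε, 0]`, `ω t` runs over a half period, on which the square has mean
`(A² + B²) / 2`; hence each integral is `(A² + B²) / 2 · |log ε|`.
-/

def powLogTrig (ω A B k : ℝ) (r : ℝ) : ℝ :=
  r ^ k * (A * sin (ω * log r) + B * cos (ω * log r))

theorem hasDerivAt_powLogTrig (ω A B k : ℝ) {r : ℝ} (hr : 0 < r) :
    HasDerivAt (powLogTrig ω A B k)
      (powLogTrig ω (k * A - ω * B) (k * B + ω * A) (k - 1) r) r := by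
  have hθ : HasDerivAt (fun r : ℝ => ω * log r) (ω * r⁻¹) r :=
    (hasDerivAt_log hr.ne').const_mul ω
  have hpow : HasDerivAt (fun r : ℝ => r ^ k) (k * r ^ (k - 1)) r :=
    hasDerivAt_rpow_const (Or.inl hr.ne')
  refine (hpow.mul ((hθ.sin.const_mul A).add (hθ.cos.const_mul B))).congr_deriv ?_
  simp only [powLogTrig, Pi.add_apply, rpow_sub_one hr.ne']
  field_simp
  ring

theorem Set.EqOn.deriv_powLogTrig {f : ℝ → ℝ} {ω A B k : ℝ} {s : Set ℝ}
    (hf : EqOn f (powLogTrig ω A B k) s) (hs : IsOpen s) (hs0 : s ⊆ Ioi 0) :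
    EqOn (_root_.deriv f) (powLogTrig ω (k * A - ω * B) (k * B + ω * A) (k - 1)) s :=
  (hf.deriv hs).trans fun _ hr => (hasDerivAt_powLogTrig ω A B k (hs0 hr)).deriv

theorem powLogTrig_sq_mul_pow {k : ℝ} {m : ℕ} (hkm : 2 * k + m = -1) (ω A B : ℝ) {r : ℝ}
    (hr : 0 < r) :
    powLogTrig ω A B k r ^ 2 * r ^ m = (A * sin (ω * log r) + B * cos (ω * log r)) ^ 2 / r := by
  have hweight : (r ^ k) ^ 2 * r ^ m = r⁻¹ := by
    rw [← rpow_natCast, ← rpow_natCast r m, ← rpow_mul hr.le, ← rpow_add hr, mul_comm,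
      Nat.cast_ofNat, hkm, rpow_neg_one]
  rw [powLogTrig, div_eq_mul_inv, ← hweight]
  ring

theorem continuousOn_trig_log_sq_div (ω A B : ℝ) {s : Set ℝ} (hs : ∀ r ∈ s, r ≠ 0) :
    ContinuousOn (fun r => (A * sin (ω * log r) + B * cos (ω * log r)) ^ 2 / r) s := by
  have hθ : ContinuousOn (fun r => ω * log r) s :=
    continuousOn_const.mul (continuousOn_log.mono hs)
  exact ((((continuous_sin.comp_continuousOn hθ).const_mul A).add
    ((continuous_cos.comp_continuousOn hθ).const_mul B)).pow 2).div continuousOn_id hs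

theorem integral_trig_log_sq_div {a b ω : ℝ} (ha : 0 < a) (hb : 0 < b) {j : ℤ} (hj : j ≠ 0)
    (hω : ω * (log b - log a) = j * π) (A B : ℝ) :
    ∫ r in a..b, (A * sin (ω * log r) + B * cos (ω * log r)) ^ 2 / r
      = (A ^ 2 + B ^ 2) / 2 * (log b - log a) := by
  have hω0 : ω ≠ 0 := by rintro rfl; simp [hj, pi_ne_zero] at hω
  have hpos : ∀ r ∈ uIcc a b, 0 < r := fun r hr => lt_of_lt_of_le (lt_min ha hb) hr.1
  let G : ℝ → ℝ := fun r => (A ^ 2 + B ^ 2) / 2 * log r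
    - (A ^ 2 - B ^ 2) / (4 * ω) * sin (2 * (ω * log r)) - A * B / (2 * ω) * cos (2 * (ω * log r))
  have hG : ∀ r ∈ uIcc a b,
      HasDerivAt G ((A * sin (ω * log r) + B * cos (ω * log r)) ^ 2 / r) r := by
    intro r hr
    have hlog := hasDerivAt_log (hpos r hr).ne'
    have hθ := (hlog.const_mul ω).const_mul 2
    refine (((hlog.const_mul _).sub (hθ.sin.const_mul _)).sub (hθ.cos.const_mul _)).congr_deriv ?_
    have hsq : (A * sin (ω * log r) + B * cos (ω * log r)) ^ 2
        = (A ^ 2 + B ^ 2) / 2 - (A ^ 2 - B ^ 2) / 2 * cos (2 * (ω * log r))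
          + A * B * sin (2 * (ω * log r)) := by
      rw [sin_two_mul, cos_two_mul]
      linear_combination A ^ 2 * sin_sq_add_cos_sq (ω * log r)
    rw [hsq]
    field_simp
    ring
  rw [intervalIntegral.integral_eq_sub_of_hasDerivAt hG
    (continuousOn_trig_log_sq_div ω A B fun r hr => (hpos r hr).ne').intervalIntegrable]
  have hshift : 2 * (ω * log b) = 2 * (ω * log a) + j * (2 * π) := by
    linear_combination 2 * hω
  simp only [G, hshift, sin_add_int_mul_two_pi, cos_add_int_mul_two_pi]
  ring

section Weighted

variable {f : ℝ → ℝ} {a b ω A B k : ℝ} {m : ℕ}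

theorem eqOn_sq_mul_pow_of_eqOn_powLogTrig (ha : 0 < a) (hab : a ≤ b)
    (hf : EqOn f (powLogTrig ω A B k) (Ioo a b)) (hkm : 2 * k + m = -1) :
    EqOn (fun r => f r ^ 2 * r ^ m)
      (fun r => (A * sin (ω * log r) + B * cos (ω * log r)) ^ 2 / r) (uIoo a b) := by
  rw [uIoo_of_le hab]
  intro r hr
  simp only [hf hr, powLogTrig_sq_mul_pow hkm ω A B (ha.trans hr.1)]

theorem intervalIntegrable_sq_mul_pow_of_eqOn_powLogTrig (ha : 0 < a) (hab : a ≤ b)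
    (hf : EqOn f (powLogTrig ω A B k) (Ioo a b)) (hkm : 2 * k + m = -1) :
    IntervalIntegrable (fun r => f r ^ 2 * r ^ m) volume a b :=
  (intervalIntegrable_congr_uIoo (eqOn_sq_mul_pow_of_eqOn_powLogTrig ha hab hf hkm)).mpr
    (continuousOn_trig_log_sq_div ω A B fun _ hr =>
      (lt_of_lt_of_le (lt_min ha (ha.trans_le hab)) hr.1).ne').intervalIntegrable

theorem integral_sq_mul_pow_of_eqOn_powLogTrig (ha : 0 < a) (hab : a ≤ b) {j : ℤ} (hj : j ≠ 0)
    (hω : ω * (log b - log a) = j * π) (hf : EqOn f (powLogTrig ω A B k) (Ioo a b))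
    (hkm : 2 * k + m = -1) :
    ∫ r in a..b, f r ^ 2 * r ^ m = (A ^ 2 + B ^ 2) / 2 * (log b - log a) :=
  (intervalIntegral.integral_congr_uIoo (eqOn_sq_mul_pow_of_eqOn_powLogTrig ha hab hf hkm)).trans
    (integral_trig_log_sq_div ha (ha.trans_le hab) hj hω A B)

end Weighted

theorem intervalIntegral_eq_of_eqOn_zero_Ioo {g : ℝ → ℝ} {c a b : ℝ} (hca : c ≤ a)
    (hg : EqOn g 0 (Ioo c a)) (hint : IntervalIntegrable g volume a b) :
    ∫ x in c..b, g x = ∫ x in a..b, g x := by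
  have hg' : EqOn g 0 (uIoo c a) := by rwa [uIoo_of_le hca]
  rw [← intervalIntegral.integral_add_adjacent_intervals
    ((intervalIntegrable_congr_uIoo hg').mpr intervalIntegrable_const) hint,
    intervalIntegral.integral_congr_uIoo hg']
  simp

theorem vepsn_eqOn_Iic (n : ℕ) (ε : ℝ) : EqOn (vepsn n ε) 0 (Iic ε) :=
  fun _ hr => if_pos hr

theorem vepsn_eqOn_Ioi (n : ℕ) (ε : ℝ) :
    EqOn (vepsn n ε) (powLogTrig (π / log ε) 1 0 (-(((n : ℝ) - 2) / 2))) (Ioi ε) := by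
  intro r (hr : ε < r)
  simp only [vepsn, powLogTrig, if_neg (not_le.mpr hr), div_mul_eq_mul_div, one_mul, zero_mul,
    add_zero]

theorem deriv_vepsn_eqOn_Iio (n : ℕ) (ε : ℝ) : EqOn (deriv (vepsn n ε)) 0 (Iio ε) :=
  (((vepsn_eqOn_Iic n ε).mono Iio_subset_Iic_self).deriv isOpen_Iio).trans
    (by simp [EqOn])

/-- Exact values of the weighted norms of `v_ε`:
`∫₀¹ v_ε² r^{n−3} = |log ε|/2`,
`∫₀¹ v_ε'² r^{n−1} = (n−2)²|log ε|/8 + π²/(2|log ε|)`, and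
`∫_ε¹ v_ε''² r^{n+1} = n²(n−2)²|log ε|/32 + π²(n²−2n+2)/(4|log ε|) + π⁴/(2|log ε|³)`. -/
theorem vepsn_norms (n : ℕ) (hn : 3 ≤ n) (ε : ℝ) (hε : ε ∈ Set.Ioo (0:ℝ) 1) :
    (∫ r in (0:ℝ)..1, (vepsn n ε r) ^ 2 * r ^ (n - 3)) = |Real.log ε| / 2 ∧
    (∫ r in (0:ℝ)..1, (deriv (vepsn n ε) r) ^ 2 * r ^ (n - 1))
      = ((n : ℝ) - 2) ^ 2 * |Real.log ε| / 8 + π ^ 2 / (2 * |Real.log ε|) ∧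
    (∫ r in ε..1, (deriv (deriv (vepsn n ε)) r) ^ 2 * r ^ (n + 1))
      = (n : ℝ) ^ 2 * ((n : ℝ) - 2) ^ 2 * |Real.log ε| / 32
        + π ^ 2 * ((n : ℝ) ^ 2 - 2 * (n : ℝ) + 2) / (4 * |Real.log ε|)
        + π ^ 4 / (2 * |Real.log ε| ^ 3) := by
  obtain ⟨hε0, hε1⟩ := hε
  have hL : log ε < 0 := log_neg hε0 hε1
  have hω : π / log ε * (log 1 - log ε) = ((-1 : ℤ) : ℝ) * π := by
    rw [log_one]
    field_simp [hL.ne]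
    push_cast
    ring
  have hpos : Ioo ε 1 ⊆ Ioi 0 := fun r hr => hε0.trans hr.1
  have hv := (vepsn_eqOn_Ioi n ε).mono fun r (hr : r ∈ Ioo ε 1) => hr.1
  have hv' := hv.deriv_powLogTrig isOpen_Ioo hpos
  have hv'' := hv'.deriv_powLogTrig isOpen_Ioo hpos
  have hk0 : 2 * -(((n : ℝ) - 2) / 2) + ((n - 3 : ℕ) : ℝ) = -1 := by
    rw [Nat.cast_sub hn]; push_cast; ring
  have hk1 : 2 * (-(((n : ℝ) - 2) / 2) - 1) + ((n - 1 : ℕ) : ℝ) = -1 := by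
    rw [Nat.cast_sub (by omega)]; push_cast; ring
  have hk2 : 2 * (-(((n : ℝ) - 2) / 2) - 1 - 1) + ((n + 1 : ℕ) : ℝ) = -1 := by
    push_cast; ring
  refine ⟨?_, ?_, ?_⟩
  · rw [intervalIntegral_eq_of_eqOn_zero_Ioo hε0.le
      (fun r hr => by simp [vepsn_eqOn_Iic n ε hr.2.le])
      (intervalIntegrable_sq_mul_pow_of_eqOn_powLogTrig hε0 hε1.le hv hk0),
      integral_sq_mul_pow_of_eqOn_powLogTrig hε0 hε1.le (by norm_num) hω hv hk0,
      log_one, abs_of_neg hL]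
    ring
  · rw [intervalIntegral_eq_of_eqOn_zero_Ioo hε0.le
      (fun r hr => by simp [deriv_vepsn_eqOn_Iio n ε hr.2])
      (intervalIntegrable_sq_mul_pow_of_eqOn_powLogTrig hε0 hε1.le hv' hk1),
      integral_sq_mul_pow_of_eqOn_powLogTrig hε0 hε1.le (by norm_num) hω hv' hk1,
      log_one, abs_of_neg hL]
    field_simp [hL.ne]
    ring
  · rw [integral_sq_mul_pow_of_eqOn_powLogTrig hε0 hε1.le (by norm_num) hω hv'' hk2,
      log_one, abs_of_neg hL]
    field_simp [hL.ne]
    ring
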